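/- arXiv:2208.10456 — 3 statements merged into one kernel-verified Lean document; each statement's English description precedes it below -/
import Mathlib

section
/- Bounded monotonicity is compositional with respect to sequential composition: let (Σ, ⊕, u) be a partial commutative monoid, let ver₁, ver₂ : Σ → Prop and sem₁, sem₂ : Σ → Set Σ, and define the sequential composition by ver(φ) iff ver₁(φ) and ver₂(a) for every a ∈ sem₁(φ), and sem(φ) := ⋃_{a ∈ sem₁(φ)} sem₂(a). Let sem̄₁(T) := ⋃ {sem₁(φ) | ver₁(φ) and φ' ⪰ φ for some φ' ∈ T}. If mono(T) holds for (ver₁, sem₁) and mono(sem̄₁(T)) holds for (ver₂, sem₂), then mono(T) holds for the sequential composition (ver, sem). -/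
/-- A partial commutative monoid: `op` is a partial (Option-valued), commutative,
associative binary operation with neutral element `unit`. The `Option.bind`
formulation of associativity also entails that whenever a sum is defined,
so are all of its subsums. -/
structure PCM (S : Type*) where
  op : S → S → Option S
  unit : S
  comm : ∀ a b, op a b = op b a
  assoc : ∀ a b c, (op a b).bind (fun ab => op ab c) = (op b c).bind (fun bc => op a bc)
  unit_op : ∀ a, op unit a = some a

namespace PCM

variable {S : Type*} (P : PCM S)

/-- `φ # φ'`: the sum is defined. -/
def compat (a b : S) : Prop := (P.op a b).isSome

/-- `b ⪰ a` : `b = a ⊕ c` for some `c`. -/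
def succ (b a : S) : Prop := ∃ c, P.op a c = some b

/-- `p` is pure iff `p # p` and `p = p ⊕ p`. -/
def pure (p : S) : Prop := P.op p p = some p

/-- Lifted addition on sets of states. -/
def setOp (T U : Set S) : Set S := {x | ∃ a ∈ T, ∃ b ∈ U, P.op a b = some x}

/-- Lifted order on sets of states: every element of `T` dominates some element of `U`. -/
def setSucc (T U : Set S) : Prop := ∀ a ∈ T, ∃ b ∈ U, P.succ a b

/-- Bounded (safety and output) monotonicity for a verifier `(ver, sem)` with
resource bound `T`. -/
def mono (ver : S → Prop) (sem : S → Set S) (T : Set S) : Prop :=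
  ∀ φ₁ φ₂ : S, (∃ φ₃ ∈ T, P.succ φ₃ φ₂) → P.succ φ₂ φ₁ → ver φ₁ →
    ver φ₂ ∧ P.setSucc (sem φ₂) (sem φ₁)

/-- Bounded framing for a verifier `(ver, sem)` with resource bound `T`. -/
def framing (ver : S → Prop) (sem : S → Set S) (T : Set S) : Prop :=
  ∀ φ r φr : S, P.op φ r = some φr → (∃ φ' ∈ T, P.succ φ' φr) → ver φ →
    ver φr ∧ P.setSucc (sem φr) (P.setOp (sem φ) {r})

end PCM

/-!
Monotonicity of `(ver₁, sem₁)` places every intermediate state `a ∈ sem₁ φ₂` above some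
`b ∈ sem₁ φ₁`. Such an `a` lies in `sem̄₁(T)` and, by reflexivity of `⪰`, is dominated by an
element of that bound, so monotonicity of `(ver₂, sem₂)` applies to the pair `b ⪯ a`.
-/

namespace PCM

variable {S : Type*} (P : PCM S)

theorem succ_refl (a : S) : P.succ a a :=
  ⟨P.unit, by rw [P.comm]; exact P.unit_op a⟩

theorem setSucc_biUnion {A B : Set S} {f g : S → Set S}
    (h : ∀ a ∈ A, ∃ b ∈ B, P.setSucc (f a) (g b)) :
    P.setSucc (⋃ a ∈ A, f a) (⋃ b ∈ B, g b) := by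
  intro x hx
  obtain ⟨a, ha, hxa⟩ := Set.mem_iUnion₂.mp hx
  obtain ⟨b, hb, hab⟩ := h a ha
  obtain ⟨y, hy, hxy⟩ := hab x hxa
  exact ⟨y, Set.mem_iUnion₂.mpr ⟨b, hb, hy⟩, hxy⟩

variable {P}

theorem mono.of_mem {ver : S → Prop} {sem : S → Set S} {T : Set S} (h : P.mono ver sem T)
    {a b : S} (ha : a ∈ T) (hab : P.succ a b) (hb : ver b) :
    ver a ∧ P.setSucc (sem a) (sem b) :=
  h b a ⟨a, ha, P.succ_refl a⟩ hab hb

end PCM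

/-- Bounded monotonicity is compositional with respect to sequential composition. -/
theorem mono_seq {S : Type*} (P : PCM S) (ver₁ ver₂ : S → Prop) (sem₁ sem₂ : S → Set S)
    (T : Set S)
    (h₁ : P.mono ver₁ sem₁ T)
    (h₂ : P.mono ver₂ sem₂ {x | ∃ φ : S, ver₁ φ ∧ (∃ φ' ∈ T, P.succ φ' φ) ∧ x ∈ sem₁ φ}) :
    P.mono (fun φ => ver₁ φ ∧ ∀ a ∈ sem₁ φ, ver₂ a)
      (fun φ => ⋃ a ∈ sem₁ φ, sem₂ a) T := by
  rintro φ₁ φ₂ hT h21 ⟨hver₁, hver₂⟩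
  obtain ⟨hver₁', hsem₁⟩ := h₁ φ₁ φ₂ hT h21 hver₁
  have hstep : ∀ a ∈ sem₁ φ₂, ∃ b ∈ sem₁ φ₁, ver₂ a ∧ P.setSucc (sem₂ a) (sem₂ b) := by
    intro a ha
    obtain ⟨b, hb, hab⟩ := hsem₁ a ha
    exact ⟨b, hb, h₂.of_mem ⟨φ₂, hver₁', hT, ha⟩ hab (hver₂ b hb)⟩
  refine ⟨⟨hver₁', fun a ha => ?_⟩, P.setSucc_biUnion fun a ha => ?_⟩
  · obtain ⟨b, -, hva, -⟩ := hstep a ha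
    exact hva
  · obtain ⟨b, hb, -, hab⟩ := hstep a ha
    exact ⟨b, hb, hab⟩
end

section
/- Bounded framing is compositional with respect to sequential composition: let (Σ, ⊕, u) be a partial commutative monoid, let ver₁, ver₂ : Σ → Prop and sem₁, sem₂ : Σ → Set Σ, and define the sequential composition by ver(φ) iff ver₁(φ) and ver₂(a) for every a ∈ sem₁(φ), and sem(φ) := ⋃_{a ∈ sem₁(φ)} sem₂(a). Let sem̄₁(T) := ⋃ {sem₁(φ) | ver₁(φ) and φ' ⪰ φ for some φ' ∈ T}. If framing(T) holds for (ver₁, sem₁) and framing(sem̄₁(T)) holds for (ver₂, sem₂), then framing(T) holds for the sequential composition (ver, sem). -/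
namespace PCM

variable {S : Type*} (P : PCM S)

theorem op_assoc_of_op_left {a b c ab abc : S} (hab : P.op a b = some ab)
    (habc : P.op ab c = some abc) : ∃ bc, P.op b c = some bc ∧ P.op a bc = some abc := by
  have h := P.assoc a b c
  rw [hab, Option.bind_some, habc, eq_comm, Option.bind_eq_some_iff] at h
  exact h

theorem op_assoc_of_op_right {a b c bc abc : S} (hbc : P.op b c = some bc)
    (habc : P.op a bc = some abc) : ∃ ab, P.op a b = some ab ∧ P.op ab c = some abc := by
  have h := P.assoc a b c
  rw [hbc, Option.bind_some, habc, Option.bind_eq_some_iff] at h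
  exact h

theorem succ_trans {a b c : S} (hcb : P.succ c b) (hba : P.succ b a) : P.succ c a := by
  obtain ⟨d, hd⟩ := hcb
  obtain ⟨e, he⟩ := hba
  obtain ⟨ed, -, hed⟩ := P.op_assoc_of_op_left he hd
  exact ⟨ed, hed⟩

theorem exists_op_of_succ_op {s r sr a : S} (hsr : P.op s r = some sr) (ha : P.succ a sr) :
    ∃ rc, P.succ rc r ∧ P.op s rc = some a := by
  obtain ⟨c, hc⟩ := ha
  obtain ⟨rc, hrc, hsrc⟩ := P.op_assoc_of_op_left hsr hc
  exact ⟨rc, ⟨c, hrc⟩, hsrc⟩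

theorem exists_op_succ_of_succ {t r rc y : S} (hy : P.op t rc = some y) (hrc : P.succ rc r) :
    ∃ tr, P.op t r = some tr ∧ P.succ y tr := by
  obtain ⟨c, hc⟩ := hrc
  obtain ⟨tr, htr, htrc⟩ := P.op_assoc_of_op_right hc hy
  exact ⟨tr, htr, c, htrc⟩

theorem setSucc_trans {T U V : Set S} (hTU : P.setSucc T U) (hUV : P.setSucc U V) :
    P.setSucc T V := by
  intro a ha
  obtain ⟨b, hb, hab⟩ := hTU a ha
  obtain ⟨c, hc, hbc⟩ := hUV b hb
  exact ⟨c, hc, P.succ_trans hab hbc⟩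

theorem setSucc_of_subset_right {T U V : Set S} (hTU : P.setSucc T U) (hUV : U ⊆ V) :
    P.setSucc T V := fun a ha =>
  let ⟨b, hb, hab⟩ := hTU a ha
  ⟨b, hUV hb, hab⟩

theorem setSucc_biUnion_s10 {ι : Type*} {A : Set ι} {f : ι → Set S} {U : Set S}
    (h : ∀ i ∈ A, P.setSucc (f i) U) : P.setSucc (⋃ i ∈ A, f i) U := by
  intro a ha
  simp only [Set.mem_iUnion] at ha
  obtain ⟨i, hi, hai⟩ := ha
  exact h i hi a hai

theorem setOp_mono_left {U U' V : Set S} (hUU' : U ⊆ U') : P.setOp U V ⊆ P.setOp U' V :=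
  fun _ ⟨a, ha, b, hb, hab⟩ => ⟨a, hUU' ha, b, hb, hab⟩

theorem setSucc_setOp_singleton_of_succ (U : Set S) {r rc : S} (hrc : P.succ rc r) :
    P.setSucc (P.setOp U {rc}) (P.setOp U {r}) := by
  rintro y ⟨t, ht, _, rfl, hy⟩
  obtain ⟨tr, htr, hytr⟩ := P.exists_op_succ_of_succ hy hrc
  exact ⟨tr, ⟨t, ht, r, rfl, htr⟩, hytr⟩

end PCM

/-- Bounded framing is compositional with respect to sequential composition. -/
theorem framing_seq {S : Type*} (P : PCM S) (ver₁ ver₂ : S → Prop) (sem₁ sem₂ : S → Set S)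
    (T : Set S)
    (h₁ : P.framing ver₁ sem₁ T)
    (h₂ : P.framing ver₂ sem₂ {x | ∃ φ : S, ver₁ φ ∧ (∃ φ' ∈ T, P.succ φ' φ) ∧ x ∈ sem₁ φ}) :
    P.framing (fun φ => ver₁ φ ∧ ∀ a ∈ sem₁ φ, ver₂ a)
      (fun φ => ⋃ a ∈ sem₁ φ, sem₂ a) T := by
  rintro φ r φr hφr hbound ⟨hver₁, hver₂⟩
  obtain ⟨hver₁r, hsem₁⟩ := h₁ φ r φr hφr hbound hver₁
  have step : ∀ a ∈ sem₁ φr,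
      ver₂ a ∧ P.setSucc (sem₂ a) (P.setOp (⋃ s ∈ sem₁ φ, sem₂ s) {r}) := by
    intro a ha
    obtain ⟨_, ⟨s, hs, _, rfl, hsr⟩, hasr⟩ := hsem₁ a ha
    obtain ⟨rc, hrc, hsrc⟩ := P.exists_op_of_succ_op hsr hasr
    have ha_bound : ∃ a' ∈ {x | ∃ φ : S, ver₁ φ ∧ (∃ φ' ∈ T, P.succ φ' φ) ∧ x ∈ sem₁ φ},
        P.succ a' a := ⟨a, ⟨φr, hver₁r, hbound, ha⟩, P.succ_refl a⟩
    obtain ⟨hver₂a, hsem₂⟩ := h₂ s rc a hsrc ha_bound (hver₂ s hs)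
    refine ⟨hver₂a, P.setSucc_of_subset_right ?_
      (P.setOp_mono_left (Set.subset_biUnion_of_mem hs))⟩
    exact P.setSucc_trans hsem₂ (P.setSucc_setOp_singleton_of_succ _ hrc)
  exact ⟨⟨hver₁r, fun a ha => (step a ha).1⟩, P.setSucc_biUnion_s10 fun a ha => (step a ha).2⟩
end

section
/- Inhale statements with monotone well-definedness are bounded mono and bounded framing: let (Σ, ⊕, u) be a partial commutative monoid and P an assertion such that P(φ) ≠ Error and φ' ⪰ φ imply P(φ') ≠ Error. Then for every resource bound T ⊆ Σ, both mono(T) and framing(T) hold for the statement inhale P (with ver(φ) iff P(φ) ≠ Error and sem(φ) = {φ} ⊕ ⟨P⟩). -/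
/-- An assertion is a function `S → Option Bool`: `some true` is ⊤, `some false` is ⊥,
and `none` is Error; `⟨A⟩` is the set of states where it evaluates to ⊤. -/
def satStates {S : Type*} (A : S → Option Bool) : Set S := {i | A i = some true}

/-- Verification of `inhale A`: the assertion must be well-defined. -/
def inhaleVer {S : Type*} (A : S → Option Bool) (φ : S) : Prop := A φ ≠ none

/-- Semantics of `inhale A`: `{φ} ⊕ ⟨A⟩`. -/
def inhaleSem {S : Type*} (P : PCM S) (A : S → Option Bool) (φ : S) : Set S :=
  P.setOp {φ} (satStates A)

/-! Everything rests on the rearrangement `(a ⊕ b) ⊕ c = (a ⊕ c) ⊕ b`: the extra resource of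
the larger state, resp. the frame, can be pulled out past the inhaled part. -/

namespace PCM

variable {S : Type*} (P : PCM S)

theorem op_op_comm_right {a b c ab x : S} (h₁ : P.op a b = some ab) (h₂ : P.op ab c = some x) :
    ∃ ac, P.op a c = some ac ∧ P.op ac b = some x := by
  obtain ⟨bc, hbc, hx⟩ : ∃ bc, P.op b c = some bc ∧ P.op a bc = some x := by
    rw [← Option.bind_eq_some_iff, ← P.assoc, h₁, Option.bind_some, h₂]
  rw [← Option.bind_eq_some_iff, P.assoc, P.comm c b, hbc, Option.bind_some, hx]

theorem setSucc_of_subset {T U : Set S} (h : T ⊆ U) : P.setSucc T U :=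
  fun a ha => ⟨a, h ha, P.succ_refl a⟩

theorem setSucc_setOp_singleton_of_op {a c b : S} (U : Set S) (h : P.op a c = some b) :
    P.setSucc (P.setOp {b} U) (P.setOp {a} U) := by
  rintro x ⟨_, rfl, u, hu, hx⟩
  obtain ⟨y, hy, hyx⟩ := P.op_op_comm_right h hx
  exact ⟨y, ⟨a, rfl, u, hu, hy⟩, c, hyx⟩

theorem setOp_singleton_subset_setOp_of_op {a r ar : S} (U : Set S) (h : P.op a r = some ar) :
    P.setOp {ar} U ⊆ P.setOp (P.setOp {a} U) {r} := by
  rintro x ⟨_, rfl, u, hu, hx⟩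
  obtain ⟨y, hy, hyx⟩ := P.op_op_comm_right h hx
  exact ⟨y, ⟨a, rfl, u, hu, hy⟩, r, rfl, hyx⟩

end PCM

/-- Inhale statements whose well-definedness is monotone are bounded mono and
bounded framing for every resource bound. -/
theorem inhale_mono_and_framing {S : Type*} (P : PCM S) (A : S → Option Bool)
    (hwd : ∀ φ φ' : S, A φ ≠ none → P.succ φ' φ → A φ' ≠ none) :
    ∀ T : Set S, P.mono (inhaleVer A) (inhaleSem P A) T ∧
      P.framing (inhaleVer A) (inhaleSem P A) T := by
  intro T
  constructor
  · rintro φ₁ φ₂ - ⟨c, hc⟩ hver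
    exact ⟨hwd φ₁ φ₂ hver ⟨c, hc⟩, P.setSucc_setOp_singleton_of_op _ hc⟩
  · rintro φ r φr hφr - hver
    exact ⟨hwd φ φr hver ⟨r, hφr⟩,
      P.setSucc_of_subset (P.setOp_singleton_subset_setOp_of_op _ hφr)⟩
end
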